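/- Let S be a countably based Cu-semigroup satisfying O5, O6 and O7. For every x ∈ S and idempotents w₁, w₂ ∈ S, one has x ∧ w₁ + x ∧ w₂ = x ∧ (w₁ ∧ w₂) + x ∧ (w₁ + w₂). -/

import Mathlib

open scoped ENNReal

namespace CuFormal

variable {S : Type*} [AddCommMonoid S] [PartialOrder S]

/-- The algebra-free way-below relation: `x ≪ y` iff whenever `y ≤ sup yₙ` for an
increasing sequence with supremum, then `x ≤ yₙ` for some `n`. -/
def WayBelow (x y : S) : Prop :=
  ∀ f : ℕ → S, Monotone f → ∀ s : S, IsLUB (Set.range f) s → y ≤ s → ∃ n, x ≤ f n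

/-- Positively ordered monoid with addition monotone. -/
def PosOrdered : Prop :=
  (∀ x : S, (0 : S) ≤ x) ∧ ∀ a b c : S, b ≤ c → a + b ≤ a + c

/-- O1: every increasing sequence has a supremum. -/
def AxO1 : Prop := ∀ f : ℕ → S, Monotone f → ∃ s : S, IsLUB (Set.range f) s

/-- O2: every element is the supremum of a ≪-increasing sequence. -/
def AxO2 : Prop := ∀ x : S, ∃ f : ℕ → S, Monotone f ∧
  (∀ n, WayBelow (f n) (f (n + 1))) ∧ IsLUB (Set.range f) x

/-- O3 -/
def AxO3 : Prop := ∀ x₁ y₁ x₂ y₂ : S,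
  WayBelow x₁ y₁ → WayBelow x₂ y₂ → WayBelow (x₁ + x₂) (y₁ + y₂)

/-- O4 -/
def AxO4 : Prop := ∀ f g : ℕ → S, Monotone f → Monotone g →
  ∀ a b : S, IsLUB (Set.range f) a → IsLUB (Set.range g) b →
    IsLUB (Set.range fun n => f n + g n) (a + b)

/-- A Cu-semigroup: positively ordered monoid satisfying O1–O4. -/
def CuSemigroup : Prop :=
  PosOrdered (S := S) ∧ AxO1 (S := S) ∧ AxO2 (S := S) ∧ AxO3 (S := S) ∧ AxO4 (S := S)

/-- O5 -/
def AxO5 : Prop := ∀ x' x y w' w : S, WayBelow x' x → x ≤ y → WayBelow w' w →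
  x + w ≤ y → ∃ z : S, x' + z ≤ y ∧ y ≤ x + z ∧ WayBelow w' z

/-- O6 -/
def AxO6 : Prop := ∀ x' x y z : S, WayBelow x' x → x ≤ y + z →
  ∃ y' z' : S, x' ≤ y' + z' ∧ y' ≤ x ∧ y' ≤ y ∧ z' ≤ x ∧ z' ≤ z

/-- O7 -/
def AxO7 : Prop := ∀ x₁' x₁ x₂' x₂ w : S,
  WayBelow x₁' x₁ → x₁ ≤ w → WayBelow x₂' x₂ → x₂ ≤ w →
  ∃ x : S, WayBelow x₁' x ∧ WayBelow x₂' x ∧ x ≤ w ∧ x ≤ x₁ + x₂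

/-- An ideal: a downward hereditary subsemigroup closed under suprema of increasing
sequences. -/
def IsIdeal (J : Set S) : Prop :=
  (0 : S) ∈ J ∧ (∀ x y : S, x ∈ J → y ∈ J → x + y ∈ J) ∧
  (∀ x y : S, y ∈ J → x ≤ y → x ∈ J) ∧
  (∀ f : ℕ → S, Monotone f → (∀ n, f n ∈ J) →
    ∀ s : S, IsLUB (Set.range f) s → s ∈ J)

/-- Countably based. -/
def CountablyBased : Prop := ∃ B : Set S, B.Countable ∧
  ∀ x : S, ∃ f : ℕ → S, (∀ n, f n ∈ B) ∧ Monotone f ∧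
    (∀ n, WayBelow (f n) (f (n + 1))) ∧ IsLUB (Set.range f) x

/-- A functional on `S`: preserves `0`, addition, order and suprema of increasing
sequences. -/
def IsFunctional (l : S → ℝ≥0∞) : Prop :=
  l 0 = 0 ∧ (∀ x y : S, l (x + y) = l x + l y) ∧ Monotone l ∧
  (∀ f : ℕ → S, Monotone f → ∀ s : S, IsLUB (Set.range f) s → l s = ⨆ n, l (f n))

/-- `(x̂ ∧ ŷ)(λ) = inf { λ₁(x) + λ₂(y) : λ = λ₁ + λ₂ }`. -/
noncomputable def hatInf (x y : S) (l : S → ℝ≥0∞) : ℝ≥0∞ :=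
  sInf {t : ℝ≥0∞ | ∃ l₁ l₂ : S → ℝ≥0∞, IsFunctional l₁ ∧ IsFunctional l₂ ∧
    (∀ u : S, l u = l₁ u + l₂ u) ∧ t = l₁ x + l₂ y}

/-- Edwards' condition for the functional `l`. -/
def EdwardsFor (l : S → ℝ≥0∞) : Prop := ∀ x y : S,
  hatInf x y l = sSup {t : ℝ≥0∞ | ∃ z : S, z ≤ x ∧ z ≤ y ∧ t = l z}

/-- The ideal generated by a subset. -/
def idealGen (X : Set S) : Set S := ⋂₀ {J : Set S | IsIdeal J ∧ X ⊆ J}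

/-!
Write `a₁ = x ∧ w₁`, `a₂ = x ∧ w₂`, `b₁ = x ∧ (w₁ ∧ w₂)`, `b₂ = x ∧ (w₁ + w₂)`; all inequalities are
checked on way-below approximants. By O6, `b₂ ≤ a₁ + a₂`. For `a₁' ≪ a₁`, O5 gives `c` with
`a₁' + c ≤ x ≤ a₁ + c`, and O6 splits `a₂' ≪ a₂ ≤ a₁ + c` into a part below `a₁ ∧ a₂ ≤ b₁` and a part
below `c` which together with `a₁'` stays below `b₂`; hence `a₁ + a₂ ≤ b₁ + b₂`. Conversely, for
`b₁' ≪ b₁` take `c` with `b₁' + c ≤ a₁ ≤ b₁ + c`; then `b₂ ≤ c + (b₁ + a₂)`, and since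
`b₁ + a₂ ≤ w₂ + w₂ = w₂`, O6 improves this to `b₂ ≤ c + a₂`, whence `b₁ + b₂ ≤ a₁ + a₂`.
-/

theorem _root_.IsGLB.pair_le_left {α : Type*} [Preorder α] {a b c : α} (h : IsGLB {a, b} c) :
    c ≤ a :=
  h.1 (Set.mem_insert _ _)

theorem _root_.IsGLB.pair_le_right {α : Type*} [Preorder α] {a b c : α} (h : IsGLB {a, b} c) :
    c ≤ b :=
  h.1 (Set.mem_insert_of_mem _ rfl)

theorem _root_.IsGLB.le_of_le_of_le {α : Type*} [Preorder α] {a b c z : α}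
    (h : IsGLB {a, b} c) (ha : z ≤ a) (hb : z ≤ b) : z ≤ c :=
  h.2 (by simp [ha, hb])

theorem PosOrdered.isOrderedAddMonoid (hP : PosOrdered (S := S)) : IsOrderedAddMonoid S where
  add_le_add_left a b h c := by simpa only [add_comm _ c] using hP.2 c a b h

theorem wayBelow_zero_left (h0 : ∀ x : S, 0 ≤ x) (y : S) : WayBelow 0 y :=
  fun _ _ _ _ _ => ⟨0, h0 _⟩

omit [AddCommMonoid S] in
theorem WayBelow.trans_le {u v w : S} (h : WayBelow u v) (hvw : v ≤ w) : WayBelow u w :=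
  fun f hf s hs hws => h f hf s hs (hvw.trans hws)

omit [AddCommMonoid S] in
theorem WayBelow.le (hO2 : AxO2 (S := S)) {u v : S} (h : WayBelow u v) : u ≤ v := by
  obtain ⟨f, hf, -, hlub⟩ := hO2 v
  obtain ⟨n, hn⟩ := h f hf v hlub le_rfl
  exact hn.trans (hlub.1 ⟨n, rfl⟩)

omit [AddCommMonoid S] in
theorem AxO2.exists_seq_wayBelow (hO2 : AxO2 (S := S)) (a : S) :
    ∃ f : ℕ → S, Monotone f ∧ (∀ n, WayBelow (f n) a) ∧ IsLUB (Set.range f) a := by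
  obtain ⟨f, hf, hwb, hlub⟩ := hO2 a
  exact ⟨f, hf, fun n => (hwb n).trans_le (hlub.1 ⟨n + 1, rfl⟩), hlub⟩

omit [AddCommMonoid S] in
theorem AxO2.le_of_forall_wayBelow (hO2 : AxO2 (S := S)) {a e : S}
    (h : ∀ u, WayBelow u a → u ≤ e) : a ≤ e := by
  obtain ⟨f, -, hwb, hlub⟩ := hO2.exists_seq_wayBelow a
  exact hlub.2 (Set.forall_mem_range.2 fun n => h _ (hwb n))

theorem AxO2.add_le_of_forall_wayBelow (hO2 : AxO2 (S := S)) (hO4 : AxO4 (S := S)) {a d e : S}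
    (h : ∀ u, WayBelow u a → u + d ≤ e) : a + d ≤ e := by
  obtain ⟨f, hf, hwb, hlub⟩ := hO2.exists_seq_wayBelow a
  have hconst : IsLUB (Set.range fun _ : ℕ => d) d := by
    simpa only [Set.range_const] using isLUB_singleton
  exact (hO4 f _ hf monotone_const a d hlub hconst).2
    (Set.forall_mem_range.2 fun n => h _ (hwb n))

theorem AxO2.add_le_of_forall_wayBelow₂ (hO2 : AxO2 (S := S)) (hO4 : AxO4 (S := S)) {a b e : S}
    (h : ∀ u, WayBelow u a → ∀ v, WayBelow v b → u + v ≤ e) : a + b ≤ e :=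
  hO2.add_le_of_forall_wayBelow hO4 fun u hu => by
    rw [add_comm]
    exact hO2.add_le_of_forall_wayBelow hO4 fun v hv => add_comm u v ▸ h u hu v hv

theorem AxO5.exists_add_le_le_add (hO5 : AxO5 (S := S)) (h0 : ∀ x : S, 0 ≤ x) {x' x y : S}
    (hx : WayBelow x' x) (hxy : x ≤ y) : ∃ z, x' + z ≤ y ∧ y ≤ x + z := by
  obtain ⟨z, h₁, h₂, -⟩ :=
    hO5 x' x y 0 0 hx hxy (wayBelow_zero_left h0 0) (by rwa [add_zero])
  exact ⟨z, h₁, h₂⟩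

section IsOrderedAddMonoid

variable [IsOrderedAddMonoid S]

theorem le_add_of_le_add_of_isGLB (hO2 : AxO2 (S := S)) (hO6 : AxO6 (S := S))
    {x w a b c d : S} (ha : IsGLB {x, w} a) (hbx : b ≤ x) (hdw : d ≤ w) (h : b ≤ d + c) :
    b ≤ a + c := by
  refine hO2.le_of_forall_wayBelow fun t ht => ?_
  obtain ⟨d', c', ht, hd'b, hd'd, -, hc'c⟩ := hO6 t b d c ht h
  have hd'a : d' ≤ a := ha.le_of_le_of_le (hd'b.trans hbx) (hd'd.trans hdw)
  exact ht.trans (add_le_add hd'a hc'c)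

theorem le_add_of_isGLB_of_isGLB (hO2 : AxO2 (S := S)) (hO6 : AxO6 (S := S))
    {x w₁ w₂ a₁ a₂ b : S} (ha₁ : IsGLB {x, w₁} a₁) (ha₂ : IsGLB {x, w₂} a₂)
    (hbx : b ≤ x) (hbw : b ≤ w₁ + w₂) : b ≤ a₁ + a₂ := by
  have hb : b ≤ a₁ + w₂ := le_add_of_le_add_of_isGLB hO2 hO6 ha₁ hbx le_rfl hbw
  rw [add_comm] at hb ⊢
  exact le_add_of_le_add_of_isGLB hO2 hO6 ha₂ hbx le_rfl hb

theorem add_le_add_isGLB (h0 : ∀ x : S, 0 ≤ x) (hO2 : AxO2 (S := S)) (hO4 : AxO4 (S := S))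
    (hO5 : AxO5 (S := S)) (hO6 : AxO6 (S := S)) {x w₁ w₂ w a₁ a₂ b₁ b₂ : S}
    (hw : IsGLB {w₁, w₂} w) (hb₁ : IsGLB {x, w} b₁) (hb₂ : IsGLB {x, w₁ + w₂} b₂)
    (ha₁x : a₁ ≤ x) (ha₁w : a₁ ≤ w₁) (ha₂x : a₂ ≤ x) (ha₂w : a₂ ≤ w₂) :
    a₁ + a₂ ≤ b₁ + b₂ := by
  refine hO2.add_le_of_forall_wayBelow₂ hO4 fun a₁' ha₁' a₂' ha₂' => ?_
  obtain ⟨c, ha₁'c, hxc⟩ := hO5.exists_add_le_le_add h0 ha₁' ha₁x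
  obtain ⟨p, q, ha₂'pq, hpa₂, hpa₁, hqa₂, hqc⟩ := hO6 a₂' a₂ a₁ c ha₂' (ha₂x.trans hxc)
  have hpb₁ : p ≤ b₁ :=
    hb₁.le_of_le_of_le (hpa₁.trans ha₁x) (hw.le_of_le_of_le (hpa₁.trans ha₁w) (hpa₂.trans ha₂w))
  have ha₁'qb₂ : a₁' + q ≤ b₂ :=
    hb₂.le_of_le_of_le ((add_le_add_right hqc _).trans ha₁'c)
      (add_le_add ((ha₁'.le hO2).trans ha₁w) (hqa₂.trans ha₂w))
  calc a₁' + a₂' ≤ a₁' + (p + q) := add_le_add_right ha₂'pq _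
    _ = p + (a₁' + q) := add_left_comm _ _ _
    _ ≤ b₁ + b₂ := add_le_add hpb₁ ha₁'qb₂

theorem isGLB_add_le_add (h0 : ∀ x : S, 0 ≤ x) (hO2 : AxO2 (S := S)) (hO4 : AxO4 (S := S))
    (hO5 : AxO5 (S := S)) (hO6 : AxO6 (S := S)) {x w₁ w₂ w a₁ a₂ b₁ b₂ : S}
    (hw₂ : w₂ + w₂ = w₂) (hw : IsGLB {w₁, w₂} w) (ha₁ : IsGLB {x, w₁} a₁)
    (ha₂ : IsGLB {x, w₂} a₂) (hb₁ : IsGLB {x, w} b₁) (hb₂ : IsGLB {x, w₁ + w₂} b₂) :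
    b₁ + b₂ ≤ a₁ + a₂ := by
  have hb₁w₂ : b₁ ≤ w₂ := hb₁.pair_le_right.trans hw.pair_le_right
  have hb₁a₁ : b₁ ≤ a₁ :=
    ha₁.le_of_le_of_le hb₁.pair_le_left (hb₁.pair_le_right.trans hw.pair_le_left)
  refine hO2.add_le_of_forall_wayBelow hO4 fun b₁' hb₁' => ?_
  obtain ⟨c, hb₁'c, ha₁c⟩ := hO5.exists_add_le_le_add h0 hb₁' hb₁a₁
  have hb₁a₂w₂ : b₁ + a₂ ≤ w₂ := hw₂ ▸ add_le_add hb₁w₂ ha₂.pair_le_right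
  have hb₂c : b₂ ≤ a₂ + c := by
    refine le_add_of_le_add_of_isGLB hO2 hO6 ha₂ hb₂.pair_le_left hb₁a₂w₂ ?_
    calc b₂ ≤ a₁ + a₂ :=
          le_add_of_isGLB_of_isGLB hO2 hO6 ha₁ ha₂ hb₂.pair_le_left hb₂.pair_le_right
      _ ≤ b₁ + c + a₂ := add_le_add_left ha₁c _
      _ = b₁ + a₂ + c := add_right_comm _ _ _
  calc b₁' + b₂ ≤ b₁' + (a₂ + c) := add_le_add_right hb₂c _
    _ = b₁' + c + a₂ := by rw [add_comm a₂, add_assoc]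
    _ ≤ a₁ + a₂ := add_le_add_left hb₁'c _

end IsOrderedAddMonoid

theorem stmt11_general {S : Type*} [AddCommMonoid S] [PartialOrder S]
    (hCu : CuSemigroup (S := S))
    (hO5 : AxO5 (S := S)) (hO6 : AxO6 (S := S))
    (x w₁ w₂ : S) (hw₂ : w₂ + w₂ = w₂)
    (w₁₂ : S) (hw₁₂ : IsGLB {w₁, w₂} w₁₂)
    (a₁ : S) (ha₁ : IsGLB {x, w₁} a₁)
    (a₂ : S) (ha₂ : IsGLB {x, w₂} a₂)
    (b₁ : S) (hb₁ : IsGLB {x, w₁₂} b₁)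
    (b₂ : S) (hb₂ : IsGLB {x, w₁ + w₂} b₂) :
    a₁ + a₂ = b₁ + b₂ := by
  obtain ⟨hP, -, hO2, -, hO4⟩ := hCu
  have := hP.isOrderedAddMonoid
  exact le_antisymm
    (add_le_add_isGLB hP.1 hO2 hO4 hO5 hO6 hw₁₂ hb₁ hb₂ ha₁.pair_le_left ha₁.pair_le_right
      ha₂.pair_le_left ha₂.pair_le_right)
    (isGLB_add_le_add hP.1 hO2 hO4 hO5 hO6 hw₂ hw₁₂ ha₁ ha₂ hb₁ hb₂)

/-- `x ∧ w₁ + x ∧ w₂ = x ∧ (w₁ ∧ w₂) + x ∧ (w₁ + w₂)` for idempotents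
`w₁, w₂`. -/
theorem stmt11 {S : Type*} [AddCommMonoid S] [PartialOrder S]
    (hCu : CuSemigroup (S := S)) (hcb : CountablyBased (S := S))
    (hO5 : AxO5 (S := S)) (hO6 : AxO6 (S := S)) (hO7 : AxO7 (S := S))
    (x w₁ w₂ : S) (hw₁ : w₁ + w₁ = w₁) (hw₂ : w₂ + w₂ = w₂)
    (w₁₂ : S) (hw₁₂ : IsGLB {w₁, w₂} w₁₂)
    (a₁ : S) (ha₁ : IsGLB {x, w₁} a₁)
    (a₂ : S) (ha₂ : IsGLB {x, w₂} a₂)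
    (b₁ : S) (hb₁ : IsGLB {x, w₁₂} b₁)
    (b₂ : S) (hb₂ : IsGLB {x, w₁ + w₂} b₂) :
    a₁ + a₂ = b₁ + b₂ :=
  stmt11_general hCu hO5 hO6 x w₁ w₂ hw₂ w₁₂ hw₁₂ a₁ ha₁ a₂ ha₂ b₁ hb₁ b₂ hb₂

end CuFormal
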